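/- arXiv:2410.11558 — 2 statements merged into one kernel-verified Lean document; each statement's English description precedes it below -/
import Mathlib

section
/- Let (q(t), S_1(t), …, S_N(t)) be a smooth curve in ℝ^d × ℝ^N. The curve satisfies the Euler–Lagrange equations of the discrete thermodynamic system, namely d/dt(∂L/∂v(q,q̇,S)) − ∂L/∂q(q,q̇,S) = Σ_{i=1}^N F^{fr(i)}(q,q̇,S) and (∂L/∂S_i)·Ṡ_i = ⟨F^{fr(i)}(q,q̇,S), q̇⟩ − Σ_{j=1}^N J^i_j·(∂L/∂S_j) for each i, if and only if the curve (q(t), p(t), S_1(t), …, S_N(t)) with p(t) = ∂L/∂v(q(t),q̇(t),S(t)) satisfies q̇ = ∂H/∂p, ṗ = −∂H/∂q + Σ_{i=1}^N F^{fr(i)}(q,q̇,S), and (∂H/∂S_i)·Ṡ_i = −⟨F^{fr(i)}(q,q̇,S), q̇⟩ − Σ_{j=1}^N J^i_j·(∂H/∂S_j) for each i, where all partial derivatives are evaluated along the curve. -/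
open scoped RealInnerProductSpace

noncomputable section

/-- Partial gradient of `F (q, v, S)` in the first (position) variable. -/
def pdq {d N : ℕ} (F : EuclideanSpace ℝ (Fin d) → EuclideanSpace ℝ (Fin d) → (Fin N → ℝ) → ℝ)
    (q v : EuclideanSpace ℝ (Fin d)) (S : Fin N → ℝ) : EuclideanSpace ℝ (Fin d) :=
  gradient (fun x => F x v S) q

/-- Partial gradient of `F (q, v, S)` in the second (velocity/momentum) variable. -/
def pdv {d N : ℕ} (F : EuclideanSpace ℝ (Fin d) → EuclideanSpace ℝ (Fin d) → (Fin N → ℝ) → ℝ)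
    (q v : EuclideanSpace ℝ (Fin d)) (S : Fin N → ℝ) : EuclideanSpace ℝ (Fin d) :=
  gradient (fun y => F q y S) v

/-- Partial derivative of `F (q, v, S)` in the entropy `S i`. -/
def pdSi {d N : ℕ} (F : EuclideanSpace ℝ (Fin d) → EuclideanSpace ℝ (Fin d) → (Fin N → ℝ) → ℝ)
    (q v : EuclideanSpace ℝ (Fin d)) (S : Fin N → ℝ) (i : Fin N) : ℝ :=
  deriv (fun s => F q v (Function.update S i s)) (S i)

/-- `J^i_j = −κ_{ij} + δ_{ij} Σ_k κ_{ik}`. -/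
def Jmat {N : ℕ} (κ : Fin N → Fin N → ℝ) (i j : Fin N) : ℝ :=
  - κ i j + (if i = j then ∑ k, κ i k else 0)

namespace DThermoAux

variable {d N : ℕ}

def iqC (d N : ℕ) :
    EuclideanSpace ℝ (Fin d) →L[ℝ]
      EuclideanSpace ℝ (Fin d) × EuclideanSpace ℝ (Fin d) × (Fin N → ℝ) :=
  (ContinuousLinearMap.id ℝ _).prod 0

def ivC (d N : ℕ) :
    EuclideanSpace ℝ (Fin d) →L[ℝ]
      EuclideanSpace ℝ (Fin d) × EuclideanSpace ℝ (Fin d) × (Fin N → ℝ) :=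
  (0 : EuclideanSpace ℝ (Fin d) →L[ℝ] EuclideanSpace ℝ (Fin d)).prod
    ((ContinuousLinearMap.id ℝ _).prod 0)

@[simp] lemma iqC_apply (h : EuclideanSpace ℝ (Fin d)) : iqC d N h = (h, 0, 0) := rfl
@[simp] lemma ivC_apply (h : EuclideanSpace ℝ (Fin d)) : ivC d N h = (0, h, 0) := rfl

lemma inner_gradient (f : EuclideanSpace ℝ (Fin d) → ℝ) (x u : EuclideanSpace ℝ (Fin d)) :
    ⟪gradient f x, u⟫ = fderiv ℝ f x u := by
  rw [gradient, InnerProductSpace.toDual_symm_apply]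

lemma gradient_eq_of_hasFDerivAt {f : EuclideanSpace ℝ (Fin d) → ℝ}
    {x g : EuclideanSpace ℝ (Fin d)} {φ : EuclideanSpace ℝ (Fin d) →L[ℝ] ℝ}
    (hf : HasFDerivAt f φ x) (hg : ∀ u, φ u = ⟪g, u⟫) : gradient f x = g := by
  rw [gradient, hf.fderiv]
  have : φ = InnerProductSpace.toDual ℝ _ g := by
    ext u
    simp [hg u]
  rw [this, LinearIsometryEquiv.symm_apply_apply]

section partials

variable {α : Type*} [NormedAddCommGroup α] [NormedSpace ℝ α]
variable {G : EuclideanSpace ℝ (Fin d) → EuclideanSpace ℝ (Fin d) → (Fin N → ℝ) → α}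

lemma partial_q
    (hG : ContDiff ℝ (⊤ : ℕ∞)
      (fun x : EuclideanSpace ℝ (Fin d) × EuclideanSpace ℝ (Fin d) × (Fin N → ℝ) =>
        G x.1 x.2.1 x.2.2))
    (q v : EuclideanSpace ℝ (Fin d)) (S : Fin N → ℝ) :
    HasFDerivAt (fun x => G x v S)
      ((fderiv ℝ
        (fun x : EuclideanSpace ℝ (Fin d) × EuclideanSpace ℝ (Fin d) × (Fin N → ℝ) =>
          G x.1 x.2.1 x.2.2) (q, v, S)).comp (iqC d N)) q :=
  ((hG.differentiable (by simp)).differentiableAt.hasFDerivAt).comp q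
    (HasFDerivAt.prodMk (hasFDerivAt_id q) (hasFDerivAt_const (v, S) q))

lemma partial_v
    (hG : ContDiff ℝ (⊤ : ℕ∞)
      (fun x : EuclideanSpace ℝ (Fin d) × EuclideanSpace ℝ (Fin d) × (Fin N → ℝ) =>
        G x.1 x.2.1 x.2.2))
    (q v : EuclideanSpace ℝ (Fin d)) (S : Fin N → ℝ) :
    HasFDerivAt (fun y => G q y S)
      ((fderiv ℝ
        (fun x : EuclideanSpace ℝ (Fin d) × EuclideanSpace ℝ (Fin d) × (Fin N → ℝ) =>
          G x.1 x.2.1 x.2.2) (q, v, S)).comp (ivC d N)) v :=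
  ((hG.differentiable (by simp)).differentiableAt.hasFDerivAt).comp v
    (HasFDerivAt.prodMk (hasFDerivAt_const q v) (HasFDerivAt.prodMk (hasFDerivAt_id v) (hasFDerivAt_const S v)))

lemma partial_S
    (hG : ContDiff ℝ (⊤ : ℕ∞)
      (fun x : EuclideanSpace ℝ (Fin d) × EuclideanSpace ℝ (Fin d) × (Fin N → ℝ) =>
        G x.1 x.2.1 x.2.2))
    (q v : EuclideanSpace ℝ (Fin d)) (S : Fin N → ℝ) (i : Fin N) :
    HasDerivAt (fun s => G q v (Function.update S i s))
      ((fderiv ℝ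
        (fun x : EuclideanSpace ℝ (Fin d) × EuclideanSpace ℝ (Fin d) × (Fin N → ℝ) =>
          G x.1 x.2.1 x.2.2) (q, v, S)) (0, 0, Pi.single i 1)) (S i) := by
  have hmap : HasDerivAt
      (fun s : ℝ =>
        ((q, v, Function.update S i s) :
          EuclideanSpace ℝ (Fin d) × EuclideanSpace ℝ (Fin d) × (Fin N → ℝ)))
      (0, 0, Pi.single i 1) (S i) :=
    HasDerivAt.prodMk (hasDerivAt_const (S i) q)
      (HasDerivAt.prodMk (hasDerivAt_const (S i) v) (hasDerivAt_update S i (S i)))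
  have hG' : HasFDerivAt
      (fun x : EuclideanSpace ℝ (Fin d) × EuclideanSpace ℝ (Fin d) × (Fin N → ℝ) =>
        G x.1 x.2.1 x.2.2)
      (fderiv ℝ
        (fun x : EuclideanSpace ℝ (Fin d) × EuclideanSpace ℝ (Fin d) × (Fin N → ℝ) =>
          G x.1 x.2.1 x.2.2) (q, v, S)) (q, v, Function.update S i (S i)) := by
    rw [Function.update_eq_self]
    exact (hG.differentiable (by simp)).differentiableAt.hasFDerivAt
  exact hG'.comp_hasDerivAt (S i) hmap

end partials

section applied

variable {L : EuclideanSpace ℝ (Fin d) → EuclideanSpace ℝ (Fin d) → (Fin N → ℝ) → ℝ}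

lemma inner_pdq
    (hL : ContDiff ℝ (⊤ : ℕ∞)
      (fun x : EuclideanSpace ℝ (Fin d) × EuclideanSpace ℝ (Fin d) × (Fin N → ℝ) =>
        L x.1 x.2.1 x.2.2))
    (q v : EuclideanSpace ℝ (Fin d)) (S : Fin N → ℝ) (u : EuclideanSpace ℝ (Fin d)) :
    ⟪pdq L q v S, u⟫ = fderiv ℝ
      (fun x : EuclideanSpace ℝ (Fin d) × EuclideanSpace ℝ (Fin d) × (Fin N → ℝ) =>
        L x.1 x.2.1 x.2.2) (q, v, S) (u, 0, 0) := by
  rw [pdq, inner_gradient, (partial_q hL q v S).fderiv]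
  rfl

lemma inner_pdv
    (hL : ContDiff ℝ (⊤ : ℕ∞)
      (fun x : EuclideanSpace ℝ (Fin d) × EuclideanSpace ℝ (Fin d) × (Fin N → ℝ) =>
        L x.1 x.2.1 x.2.2))
    (q v : EuclideanSpace ℝ (Fin d)) (S : Fin N → ℝ) (u : EuclideanSpace ℝ (Fin d)) :
    ⟪pdv L q v S, u⟫ = fderiv ℝ
      (fun x : EuclideanSpace ℝ (Fin d) × EuclideanSpace ℝ (Fin d) × (Fin N → ℝ) =>
        L x.1 x.2.1 x.2.2) (q, v, S) (0, u, 0) := by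
  rw [pdv, inner_gradient, (partial_v hL q v S).fderiv]
  rfl

lemma pdSi_eq
    (hL : ContDiff ℝ (⊤ : ℕ∞)
      (fun x : EuclideanSpace ℝ (Fin d) × EuclideanSpace ℝ (Fin d) × (Fin N → ℝ) =>
        L x.1 x.2.1 x.2.2))
    (q v : EuclideanSpace ℝ (Fin d)) (S : Fin N → ℝ) (i : Fin N) :
    pdSi L q v S i = fderiv ℝ
      (fun x : EuclideanSpace ℝ (Fin d) × EuclideanSpace ℝ (Fin d) × (Fin N → ℝ) =>
        L x.1 x.2.1 x.2.2) (q, v, S) (0, 0, Pi.single i 1) :=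
  (partial_S hL q v S i).deriv

end applied

end DThermoAux

namespace DThermoAux

section main

variable {d N : ℕ}
variable {L V H : EuclideanSpace ℝ (Fin d) → EuclideanSpace ℝ (Fin d) → (Fin N → ℝ) →
    EuclideanSpace ℝ (Fin d)}

variable {L H : EuclideanSpace ℝ (Fin d) → EuclideanSpace ℝ (Fin d) → (Fin N → ℝ) → ℝ}
variable {V : EuclideanSpace ℝ (Fin d) → EuclideanSpace ℝ (Fin d) → (Fin N → ℝ) →
    EuclideanSpace ℝ (Fin d)}

lemma key_mom
    (hL : ContDiff ℝ (⊤ : ℕ∞)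
      (fun x : EuclideanSpace ℝ (Fin d) × EuclideanSpace ℝ (Fin d) × (Fin N → ℝ) =>
        L x.1 x.2.1 x.2.2))
    (hLeg₂ : ∀ q p S, pdv L q (V q p S) S = p)
    (q0 p0 : EuclideanSpace ℝ (Fin d)) (S0 : Fin N → ℝ) (w : EuclideanSpace ℝ (Fin d)) :
    fderiv ℝ
      (fun x : EuclideanSpace ℝ (Fin d) × EuclideanSpace ℝ (Fin d) × (Fin N → ℝ) =>
        L x.1 x.2.1 x.2.2) (q0, V q0 p0 S0, S0) (0, w, 0) = ⟪p0, w⟫ := by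
  rw [← inner_pdv hL, hLeg₂]

lemma pdv_H_eq
    (hL : ContDiff ℝ (⊤ : ℕ∞)
      (fun x : EuclideanSpace ℝ (Fin d) × EuclideanSpace ℝ (Fin d) × (Fin N → ℝ) =>
        L x.1 x.2.1 x.2.2))
    (hV : ContDiff ℝ (⊤ : ℕ∞)
      (fun x : EuclideanSpace ℝ (Fin d) × EuclideanSpace ℝ (Fin d) × (Fin N → ℝ) =>
        V x.1 x.2.1 x.2.2))
    (hLeg₂ : ∀ q p S, pdv L q (V q p S) S = p)
    (hH : ∀ q p S, H q p S = ⟪p, V q p S⟫ - L q (V q p S) S)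
    (q0 p0 : EuclideanSpace ℝ (Fin d)) (S0 : Fin N → ℝ) :
    pdv H q0 p0 S0 = V q0 p0 S0 := by
  have hVp := partial_v (G := V) hV q0 p0 S0
  have hLv := partial_v (G := L) hL q0 (V q0 p0 S0) S0
  have hinner := (hasFDerivAt_id p0).inner ℝ hVp
  have hLc := hLv.comp p0 hVp
  have hsub := hinner.sub hLc
  have hfun : (fun p' => H q0 p' S0)
      = fun p' => ⟪p', V q0 p' S0⟫ - L q0 (V q0 p' S0) S0 := funext fun p' => hH q0 p' S0
  rw [pdv, hfun]
  refine gradient_eq_of_hasFDerivAt hsub ?_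
  intro u
  simp only [ContinuousLinearMap.coe_sub', Pi.sub_apply, ContinuousLinearMap.coe_comp',
    Function.comp_apply, ContinuousLinearMap.prod_apply, ContinuousLinearMap.coe_id', id_eq,
    ivC_apply, fderivInnerCLM_apply, key_mom hL hLeg₂]
  ring_nf
  rw [real_inner_comm]

lemma fderiv_split3
    {α : Type*} [NormedAddCommGroup α] [NormedSpace ℝ α]
    (Φ : EuclideanSpace ℝ (Fin d) × EuclideanSpace ℝ (Fin d) × (Fin N → ℝ) →L[ℝ] α)
    (a b : EuclideanSpace ℝ (Fin d)) (c : Fin N → ℝ) :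
    Φ (a, b, c) = Φ (a, 0, 0) + Φ (0, b, 0) + Φ (0, 0, c) := by
  rw [← map_add, ← map_add]
  congr 1
  simp [Prod.mk_add_mk]

lemma pdq_H_eq
    (hL : ContDiff ℝ (⊤ : ℕ∞)
      (fun x : EuclideanSpace ℝ (Fin d) × EuclideanSpace ℝ (Fin d) × (Fin N → ℝ) =>
        L x.1 x.2.1 x.2.2))
    (hV : ContDiff ℝ (⊤ : ℕ∞)
      (fun x : EuclideanSpace ℝ (Fin d) × EuclideanSpace ℝ (Fin d) × (Fin N → ℝ) =>
        V x.1 x.2.1 x.2.2))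
    (hLeg₂ : ∀ q p S, pdv L q (V q p S) S = p)
    (hH : ∀ q p S, H q p S = ⟪p, V q p S⟫ - L q (V q p S) S)
    (q0 p0 : EuclideanSpace ℝ (Fin d)) (S0 : Fin N → ℝ) :
    pdq H q0 p0 S0 = - pdq L q0 (V q0 p0 S0) S0 := by
  have hVq := partial_q (G := V) hV q0 p0 S0
  have hpair : HasFDerivAt
      (fun q' => ((q', V q' p0 S0, S0) :
        EuclideanSpace ℝ (Fin d) × EuclideanSpace ℝ (Fin d) × (Fin N → ℝ)))
      ((ContinuousLinearMap.id ℝ _).prod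
        (((fderiv ℝ
          (fun x : EuclideanSpace ℝ (Fin d) × EuclideanSpace ℝ (Fin d) × (Fin N → ℝ) =>
            V x.1 x.2.1 x.2.2) (q0, p0, S0)).comp (iqC d N)).prod 0)) q0 :=
    HasFDerivAt.prodMk (hasFDerivAt_id q0) (HasFDerivAt.prodMk hVq (hasFDerivAt_const S0 q0))
  have hLc := ((hL.differentiable (by simp)).differentiableAt.hasFDerivAt).comp q0 hpair
  have hinner := (hasFDerivAt_const p0 q0).inner ℝ hVq
  have hsub := hinner.sub hLc
  have hfun : (fun q' => H q' p0 S0)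
      = fun q' => ⟪p0, V q' p0 S0⟫ - L q' (V q' p0 S0) S0 := funext fun q' => hH q' p0 S0
  rw [pdq, hfun]
  refine gradient_eq_of_hasFDerivAt hsub ?_
  intro u
  simp only [ContinuousLinearMap.coe_sub', Pi.sub_apply, ContinuousLinearMap.coe_comp',
    Function.comp_apply, ContinuousLinearMap.prod_apply, ContinuousLinearMap.coe_id', id_eq,
    ContinuousLinearMap.zero_apply, iqC_apply, fderivInnerCLM_apply]
  rw [show ((u,
      (fderiv ℝ
        (fun x : EuclideanSpace ℝ (Fin d) × EuclideanSpace ℝ (Fin d) × (Fin N → ℝ) =>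
          V x.1 x.2.1 x.2.2) (q0, p0, S0)) (u, 0, 0), (0 : Fin N → ℝ)) :
      EuclideanSpace ℝ (Fin d) × EuclideanSpace ℝ (Fin d) × (Fin N → ℝ))
      = (u, 0, 0) + (0,
      (fderiv ℝ
        (fun x : EuclideanSpace ℝ (Fin d) × EuclideanSpace ℝ (Fin d) × (Fin N → ℝ) =>
          V x.1 x.2.1 x.2.2) (q0, p0, S0)) (u, 0, 0), 0) by simp [Prod.mk_add_mk], map_add]
  rw [key_mom hL hLeg₂, ← inner_pdq hL, inner_neg_left]
  simp

lemma pdSi_H_eq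
    (hL : ContDiff ℝ (⊤ : ℕ∞)
      (fun x : EuclideanSpace ℝ (Fin d) × EuclideanSpace ℝ (Fin d) × (Fin N → ℝ) =>
        L x.1 x.2.1 x.2.2))
    (hV : ContDiff ℝ (⊤ : ℕ∞)
      (fun x : EuclideanSpace ℝ (Fin d) × EuclideanSpace ℝ (Fin d) × (Fin N → ℝ) =>
        V x.1 x.2.1 x.2.2))
    (hLeg₂ : ∀ q p S, pdv L q (V q p S) S = p)
    (hH : ∀ q p S, H q p S = ⟪p, V q p S⟫ - L q (V q p S) S)
    (q0 p0 : EuclideanSpace ℝ (Fin d)) (S0 : Fin N → ℝ) (i : Fin N) :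
    pdSi H q0 p0 S0 i = - pdSi L q0 (V q0 p0 S0) S0 i := by
  have hVS := partial_S (G := V) hV q0 p0 S0 i
  have hpair : HasDerivAt
      (fun s => ((q0, V q0 p0 (Function.update S0 i s), Function.update S0 i s) :
        EuclideanSpace ℝ (Fin d) × EuclideanSpace ℝ (Fin d) × (Fin N → ℝ)))
      (0, (fderiv ℝ
        (fun x : EuclideanSpace ℝ (Fin d) × EuclideanSpace ℝ (Fin d) × (Fin N → ℝ) =>
          V x.1 x.2.1 x.2.2) (q0, p0, S0)) (0, 0, Pi.single i 1), Pi.single i 1) (S0 i) :=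
    HasDerivAt.prodMk (hasDerivAt_const (S0 i) q0) (HasDerivAt.prodMk hVS (hasDerivAt_update S0 i (S0 i)))
  have hLfull : HasFDerivAt
      (fun x : EuclideanSpace ℝ (Fin d) × EuclideanSpace ℝ (Fin d) × (Fin N → ℝ) =>
        L x.1 x.2.1 x.2.2)
      (fderiv ℝ
        (fun x : EuclideanSpace ℝ (Fin d) × EuclideanSpace ℝ (Fin d) × (Fin N → ℝ) =>
          L x.1 x.2.1 x.2.2) (q0, V q0 p0 S0, S0))
      (q0, V q0 p0 (Function.update S0 i (S0 i)), Function.update S0 i (S0 i)) := by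
    rw [Function.update_eq_self]
    exact (hL.differentiable (by simp)).differentiableAt.hasFDerivAt
  have hLc := hLfull.comp_hasDerivAt (S0 i) hpair
  have hinner := (hasDerivAt_const (S0 i) p0).inner ℝ hVS
  have hsub := hinner.sub hLc
  have hfun : (fun s => H q0 p0 (Function.update S0 i s))
      = fun s => ⟪p0, V q0 p0 (Function.update S0 i s)⟫
          - L q0 (V q0 p0 (Function.update S0 i s)) (Function.update S0 i s) :=
    funext fun s => hH q0 p0 (Function.update S0 i s)
  simp only [Function.comp_def, Pi.sub_def] at hsub
  rw [pdSi, hfun, hsub.deriv]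
  rw [fderiv_split3 (fderiv ℝ
      (fun x : EuclideanSpace ℝ (Fin d) × EuclideanSpace ℝ (Fin d) × (Fin N → ℝ) =>
        L x.1 x.2.1 x.2.2) (q0, V q0 p0 S0, S0)) 0
      ((fderiv ℝ
        (fun x : EuclideanSpace ℝ (Fin d) × EuclideanSpace ℝ (Fin d) × (Fin N → ℝ) =>
          V x.1 x.2.1 x.2.2) (q0, p0, S0)) (0, 0, Pi.single i 1))
      (Pi.single i 1)]
  have h0 : (fderiv ℝ
      (fun x : EuclideanSpace ℝ (Fin d) × EuclideanSpace ℝ (Fin d) × (Fin N → ℝ) =>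
        L x.1 x.2.1 x.2.2) (q0, V q0 p0 S0, S0))
      ((0 : EuclideanSpace ℝ (Fin d)), (0 : EuclideanSpace ℝ (Fin d)), (0 : Fin N → ℝ)) = 0 := by
    have hz : (((0 : EuclideanSpace ℝ (Fin d)), (0 : EuclideanSpace ℝ (Fin d)), (0 : Fin N → ℝ)) :
        EuclideanSpace ℝ (Fin d) × EuclideanSpace ℝ (Fin d) × (Fin N → ℝ)) = 0 := rfl
    rw [hz, map_zero]
  rw [h0, key_mom hL hLeg₂, ← pdSi_eq hL]
  simp

end main

end DThermoAux

/-- Equivalence of the Euler–Lagrange form and the Hamiltonian form of the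
equations of motion of a discrete thermodynamic system of `N` interacting
simple systems. -/
theorem discrete_system_EL_iff_Hamiltonian {d N : ℕ}
    (L : EuclideanSpace ℝ (Fin d) → EuclideanSpace ℝ (Fin d) → (Fin N → ℝ) → ℝ)
    (Ffr : Fin N →
      EuclideanSpace ℝ (Fin d) → EuclideanSpace ℝ (Fin d) → (Fin N → ℝ) → EuclideanSpace ℝ (Fin d))
    (κ : Fin N → Fin N → ℝ) (hκsymm : ∀ i j, κ i j = κ j i) (hκpos : ∀ i j, 0 ≤ κ i j)
    (V : EuclideanSpace ℝ (Fin d) → EuclideanSpace ℝ (Fin d) → (Fin N → ℝ) →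
      EuclideanSpace ℝ (Fin d))
    (hL : ContDiff ℝ (⊤ : ℕ∞)
      (fun x : EuclideanSpace ℝ (Fin d) × EuclideanSpace ℝ (Fin d) × (Fin N → ℝ) =>
        L x.1 x.2.1 x.2.2))
    (hV : ContDiff ℝ (⊤ : ℕ∞)
      (fun x : EuclideanSpace ℝ (Fin d) × EuclideanSpace ℝ (Fin d) × (Fin N → ℝ) =>
        V x.1 x.2.1 x.2.2))
    -- the Legendre transform `(q, v, S) ↦ (q, ∂L/∂v, S)` has inverse `v = V (q, p, S)`
    (hLeg₁ : ∀ q v S, V q (pdv L q v S) S = v)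
    (hLeg₂ : ∀ q p S, pdv L q (V q p S) S = p)
    (H : EuclideanSpace ℝ (Fin d) → EuclideanSpace ℝ (Fin d) → (Fin N → ℝ) → ℝ)
    (hH : ∀ q p S, H q p S = ⟪p, V q p S⟫ - L q (V q p S) S)
    (q : ℝ → EuclideanSpace ℝ (Fin d)) (S : ℝ → Fin N → ℝ)
    (hq : ContDiff ℝ (⊤ : ℕ∞) q) (hS : ContDiff ℝ (⊤ : ℕ∞) S)
    (p : ℝ → EuclideanSpace ℝ (Fin d))
    (hp : ∀ t, p t = pdv L (q t) (deriv q t) (S t)) :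
    (∀ t : ℝ,
        deriv (fun τ => pdv L (q τ) (deriv q τ) (S τ)) t - pdq L (q t) (deriv q t) (S t)
            = ∑ i, Ffr i (q t) (deriv q t) (S t)
        ∧ ∀ i : Fin N,
            pdSi L (q t) (deriv q t) (S t) i * deriv (fun τ => S τ i) t
              = ⟪Ffr i (q t) (deriv q t) (S t), deriv q t⟫
                - ∑ j, Jmat κ i j * pdSi L (q t) (deriv q t) (S t) j)
    ↔ (∀ t : ℝ,
        deriv q t = pdv H (q t) (p t) (S t)
        ∧ deriv p t = - pdq H (q t) (p t) (S t) + ∑ i, Ffr i (q t) (deriv q t) (S t)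
        ∧ ∀ i : Fin N,
            pdSi H (q t) (p t) (S t) i * deriv (fun τ => S τ i) t
              = - ⟪Ffr i (q t) (deriv q t) (S t), deriv q t⟫
                - ∑ j, Jmat κ i j * pdSi H (q t) (p t) (S t) j) := by
  have hV0 : ∀ t, V (q t) (p t) (S t) = deriv q t := fun t => by
    rw [hp t, hLeg₁]
  have hA : ∀ t, pdv H (q t) (p t) (S t) = deriv q t := fun t => by
    rw [DThermoAux.pdv_H_eq hL hV hLeg₂ hH, hV0]
  have hB : ∀ t, pdq H (q t) (p t) (S t) = - pdq L (q t) (deriv q t) (S t) := fun t => by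
    rw [DThermoAux.pdq_H_eq hL hV hLeg₂ hH, hV0]
  have hC : ∀ t i, pdSi H (q t) (p t) (S t) i = - pdSi L (q t) (deriv q t) (S t) i :=
    fun t i => by
      rw [DThermoAux.pdSi_H_eq hL hV hLeg₂ hH, hV0]
  have hdp : ∀ t, deriv p t = deriv (fun τ => pdv L (q τ) (deriv q τ) (S τ)) t := fun t => by
    congr 1
    exact funext hp
  have hsumneg : ∀ t i, (∑ j, Jmat κ i j * -pdSi L (q t) (deriv q t) (S t) j)
      = - ∑ j, Jmat κ i j * pdSi L (q t) (deriv q t) (S t) j := fun t i => by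
    simp [mul_neg]
  constructor
  · intro h t
    obtain ⟨h1, h2⟩ := h t
    refine ⟨(hA t).symm, ?_, ?_⟩
    · rw [hdp t, hB t, neg_neg]
      exact (eq_add_of_sub_eq h1).trans (add_comm _ _)
    · intro i
      have h2i := h2 i
      simp only [hC t, hsumneg t i, neg_mul]
      linarith
  · intro h t
    obtain ⟨h1, h2, h3⟩ := h t
    constructor
    · rw [hdp t, hB t, neg_neg] at h2
      exact sub_eq_of_eq_add' h2
    · intro i
      have h3i := h3 i
      simp only [hC t, hsumneg t i, neg_mul] at h3i
      linarith

end
end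

section
/- Consider the one-piston system: m > 0, U : ℝ × ℝ → ℝ smooth internal energy, H(x,p,S) = p²/(2m) + U(x,S), friction coefficient λ : ℝ × ℝ → ℝ with λ ≥ 0, Poisson bracket {F,G} = (∂F/∂x)(∂G/∂p) − (∂F/∂p)(∂G/∂x), and 4-bracket (F,G;M,N) = (λ/T)·((∂N/∂p)(∂G/∂p)(∂F/∂S)(∂M/∂S) − (∂N/∂p)(∂F/∂p)(∂G/∂S)(∂M/∂S) + (∂M/∂p)(∂F/∂p)(∂G/∂S)(∂N/∂S) − (∂M/∂p)(∂G/∂p)(∂F/∂S)(∂N/∂S)) with T := ∂U/∂S. Let (x(t), p(t), S(t)) be a smooth curve along which T ≠ 0. If for every smooth F : ℝ³ → ℝ one has d/dt F(x,p,S) = {F,H} + (F,H;S,H) along the curve, then the curve satisfies ẋ = p/m, ṗ = −∂U/∂x − λ·p/m, and Ṡ = (λ/T)·(p/m)². -/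
noncomputable section

/-- Partial derivative in the first (position) variable. -/
def pdx (F : ℝ → ℝ → ℝ → ℝ) (x p S : ℝ) : ℝ := deriv (fun a => F a p S) x

/-- Partial derivative in the second (momentum) variable. -/
def pdp (F : ℝ → ℝ → ℝ → ℝ) (x p S : ℝ) : ℝ := deriv (fun b => F x b S) p

/-- Partial derivative in the third (entropy) variable. -/
def pdS (F : ℝ → ℝ → ℝ → ℝ) (x p S : ℝ) : ℝ := deriv (fun s => F x p s) S

/-- The canonical Poisson bracket of the piston system. -/
def poisson (F G : ℝ → ℝ → ℝ → ℝ) (x p S : ℝ) : ℝ :=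
  pdx F x p S * pdp G x p S - pdp F x p S * pdx G x p S

/-- The metriplectic 4-bracket of the one-piston system, with friction
coefficient `lam` and temperature `T = ∂U/∂S`, both evaluated at `(x, S)`. -/
def bracket4piston (lam : ℝ → ℝ → ℝ) (U : ℝ → ℝ → ℝ) (F G M N : ℝ → ℝ → ℝ → ℝ)
    (x p S : ℝ) : ℝ :=
  (lam x S / deriv (fun s => U x s) S) *
    (pdp N x p S * pdp G x p S * pdS F x p S * pdS M x p S
      - pdp N x p S * pdp F x p S * pdS G x p S * pdS M x p S
      + pdp M x p S * pdp F x p S * pdS G x p S * pdS N x p S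
      - pdp M x p S * pdp G x p S * pdS F x p S * pdS N x p S)

/-- If the one-piston system evolves metriplectically,
`Ḟ = {F,H} + (F,H;S,H)` for all smooth observables `F`, then it satisfies the
piston equations of motion. -/
theorem one_piston_equations (m : ℝ) (hm : 0 < m)
    (U : ℝ → ℝ → ℝ) (hU : ContDiff ℝ (⊤ : ℕ∞) (fun x : ℝ × ℝ => U x.1 x.2))
    (lam : ℝ → ℝ → ℝ) (hlam : ∀ x S, 0 ≤ lam x S)
    (H : ℝ → ℝ → ℝ → ℝ) (hHdef : ∀ x p S, H x p S = p ^ 2 / (2 * m) + U x S)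
    (x p S : ℝ → ℝ)
    (hx : ContDiff ℝ (⊤ : ℕ∞) x) (hp : ContDiff ℝ (⊤ : ℕ∞) p) (hS : ContDiff ℝ (⊤ : ℕ∞) S)
    (hT : ∀ t : ℝ, deriv (fun s => U (x t) s) (S t) ≠ 0)
    (hdyn : ∀ F : ℝ → ℝ → ℝ → ℝ,
      ContDiff ℝ (⊤ : ℕ∞) (fun y : ℝ × ℝ × ℝ => F y.1 y.2.1 y.2.2) →
      ∀ t : ℝ,
        deriv (fun τ => F (x τ) (p τ) (S τ)) t
          = poisson F H (x t) (p t) (S t)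
            + bracket4piston lam U F H (fun _ _ s => s) H (x t) (p t) (S t)) :
    ∀ t : ℝ,
      deriv x t = p t / m
      ∧ deriv p t = - deriv (fun a => U a (S t)) (x t) - lam (x t) (S t) * p t / m
      ∧ deriv S t = (lam (x t) (S t) / deriv (fun s => U (x t) s) (S t)) * (p t / m) ^ 2 := by

  intro t
  -- partial derivatives of H
  have hHp : ∀ a b c : ℝ, pdp H a b c = b / m := by
    intro a b c
    have : (fun b' => H a b' c) = fun b' => b' ^ 2 / (2 * m) + U a c := by
      funext b'; exact hHdef a b' c
    simp only [pdp, this, deriv_add_const, deriv_div_const]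
    rw [deriv_pow_field]
    field_simp
    ring
  have hHx : ∀ a b c : ℝ, pdx H a b c = deriv (fun a' => U a' c) a := by
    intro a b c
    have : (fun a' => H a' b c) = fun a' => b ^ 2 / (2 * m) + U a' c := by
      funext a'; exact hHdef a' b c
    simp only [pdx, this, deriv_const_add]
  have hHS : ∀ a b c : ℝ, pdS H a b c = deriv (fun s => U a s) c := by
    intro a b c
    have : (fun s => H a b s) = fun s => b ^ 2 / (2 * m) + U a s := by
      funext s; exact hHdef a b s
    simp only [pdS, this, deriv_const_add]
  -- equation for x
  have ex := hdyn (fun a _ _ => a) contDiff_fst t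
  have ep := hdyn (fun _ b _ => b) (contDiff_fst.comp contDiff_snd) t
  have eS := hdyn (fun _ _ c => c) (contDiff_snd.comp contDiff_snd) t
  simp only [poisson, bracket4piston, pdx, pdp, pdS, deriv_const, deriv_id'',
    hHp, hHx, hHS] at ex ep eS
  simp only [pdp, pdx, pdS] at hHp hHx hHS
  rw [hHp, hHx, hHS] at ex ep eS
  refine ⟨?_, ?_, ?_⟩
  · rw [ex]; ring
  · rw [ep]; field_simp [hT t]; ring
  · rw [eS]; field_simp [hT t]; ring


end
end
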